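/- Let γ ∈ {0,1}³, |γ| = γ₀+γ₁+γ₂, and suppose ψ(x) = |x-α₀²|^{γ₀/2}|x-α₁²|^{γ₁/2}|x-α₂²|^{γ₂/2} φ(x) satisfies A(x)ψ'' + ½A'(x)ψ' = ¼(k(k+1)x - λ)ψ where A(x) = (x-α₀²)(x-α₁²)(x-α₂²). Then φ satisfies the generalized Lamé equation A(x)φ'' + Σⱼ(γⱼ+½)∏_{l≠j}(x-α_l²) φ' = ¼((k-|γ|)(k+|γ|+1)x - λ + D(α,γ))φ, where D(α,γ) = (α₀²+α₁²)γ₂ + (α₀²+α₂²)γ₁ + (α₁²+α₂²)γ₀ + 2γ₀γ₁α₂² + 2γ₁γ₂α₀² + 2γ₀γ₂α₁². -/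

import Mathlib

/-!
Write `ψ = w φ` with `w = ∏ |t - aⱼ|^{γⱼ/2}`, whose logarithmic derivative is
`h = ∑ (γⱼ/2)/(t - aⱼ)`. Then `ψ' = w (φ' + h φ)` and `ψ'' = w (φ'' + 2 h φ' + (h' + h²) φ)`, so
dividing the equation for `ψ` by `w ≠ 0` leaves a second-order equation for `φ`. Its first-order
coefficient `2 A h + A'/2` is the generalized Lamé coefficient, and its zeroth-order coefficient
`A (h' + h²) + A' h / 2` is the polynomial `(g (g + 1) t - D)/4`: the poles at the `aⱼ` cancel
exactly because `γⱼ ∈ {0, 1}`.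
-/

open Filter Topology

theorem hasDerivAt_abs_sub_rpow {a t : ℝ} (c : ℝ) (ht : t ≠ a) :
    HasDerivAt (fun s => |s - a| ^ c) (|t - a| ^ c * (c * (t - a)⁻¹)) t := by
  have hta : t - a ≠ 0 := sub_ne_zero.mpr ht
  have heq : (fun s => |s - a| ^ c) =ᶠ[𝓝 t] fun s => Real.exp (Real.log (s - a) * c) := by
    filter_upwards [eventually_ne_nhds ht] with s hs
    rw [Real.rpow_def_of_pos (abs_pos.mpr (sub_ne_zero.mpr hs)), Real.log_abs]
  rw [Real.rpow_def_of_pos (abs_pos.mpr hta), Real.log_abs]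
  exact ((((hasDerivAt_id' t).sub_const a).log hta).mul_const c |>.exp
    |>.congr_of_eventuallyEq heq).congr_deriv (by ring)

section LogDeriv

variable {w h φ : ℝ → ℝ} {t h' : ℝ}

theorem hasDerivAt_mul_of_logDeriv (hw : HasDerivAt w (w t * h t) t)
    (hφ : DifferentiableAt ℝ φ t) :
    HasDerivAt (fun s => w s * φ s) (w t * (deriv φ t + h t * φ t)) t :=
  (hw.fun_mul hφ.hasDerivAt).congr_deriv (by ring)

theorem deriv_deriv_mul_of_logDeriv (hw : ∀ᶠ s in 𝓝 t, HasDerivAt w (w s * h s) s)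
    (hh : HasDerivAt h h' t) (hφ : ∀ᶠ s in 𝓝 t, DifferentiableAt ℝ φ s)
    (hφ' : DifferentiableAt ℝ (deriv φ) t) :
    deriv (deriv fun s => w s * φ s) t =
      w t * (deriv (deriv φ) t + 2 * h t * deriv φ t + (h' + h t ^ 2) * φ t) := by
  have hderiv : deriv (fun s => w s * φ s) =ᶠ[𝓝 t] fun s => w s * (deriv φ s + h s * φ s) := by
    filter_upwards [hw, hφ] with s hws hφs
    exact (hasDerivAt_mul_of_logDeriv hws hφs).deriv
  rw [hderiv.deriv_eq]
  exact ((hw.self_of_nhds.fun_mul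
    (hφ'.hasDerivAt.fun_add (hh.fun_mul hφ.self_of_nhds.hasDerivAt))).congr_deriv (by ring)).deriv

theorem secondOrder_eq_of_mul_logDeriv {P Q R : ℝ}
    (hw : ∀ᶠ s in 𝓝 t, HasDerivAt w (w s * h s) s) (hwt : w t ≠ 0)
    (hh : HasDerivAt h h' t) (hφ : ∀ᶠ s in 𝓝 t, DifferentiableAt ℝ φ s)
    (hφ' : DifferentiableAt ℝ (deriv φ) t)
    (hψ : P * deriv (deriv fun s => w s * φ s) t + Q * deriv (fun s => w s * φ s) t =
      R * (w t * φ t)) :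
    P * (deriv (deriv φ) t + 2 * h t * deriv φ t + (h' + h t ^ 2) * φ t) +
      Q * (deriv φ t + h t * φ t) = R * φ t := by
  rw [deriv_deriv_mul_of_logDeriv hw hh hφ hφ',
    (hasDerivAt_mul_of_logDeriv hw.self_of_nhds hφ.self_of_nhds).deriv] at hψ
  exact mul_left_cancel₀ hwt (by linear_combination hψ)

end LogDeriv

theorem lame_firstOrder_coeff (a₀ a₁ a₂ t c₀ c₁ c₂ : ℝ)
    (h₀ : t - a₀ ≠ 0) (h₁ : t - a₁ ≠ 0) (h₂ : t - a₂ ≠ 0) :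
    2 * ((t - a₀) * (t - a₁) * (t - a₂)) *
        (c₀ / 2 * (t - a₀)⁻¹ + c₁ / 2 * (t - a₁)⁻¹ + c₂ / 2 * (t - a₂)⁻¹) +
      (1 / 2) * ((t - a₀) * (t - a₁) + (t - a₀) * (t - a₂) + (t - a₁) * (t - a₂)) =
    (c₀ + 1 / 2) * ((t - a₁) * (t - a₂)) + (c₁ + 1 / 2) * ((t - a₀) * (t - a₂)) +
      (c₂ + 1 / 2) * ((t - a₀) * (t - a₁)) := by
  field_simp
  ring

theorem lame_zeroOrder_coeff (a₀ a₁ a₂ t : ℝ) {γ₀ γ₁ γ₂ : ℕ}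
    (hγ₀ : γ₀ ≤ 1) (hγ₁ : γ₁ ≤ 1) (hγ₂ : γ₂ ≤ 1)
    (h₀ : t - a₀ ≠ 0) (h₁ : t - a₁ ≠ 0) (h₂ : t - a₂ ≠ 0) :
    (t - a₀) * (t - a₁) * (t - a₂) *
        ((γ₀ : ℝ) / 2 * (-1 / (t - a₀) ^ 2) + (γ₁ : ℝ) / 2 * (-1 / (t - a₁) ^ 2) +
            (γ₂ : ℝ) / 2 * (-1 / (t - a₂) ^ 2) +
          ((γ₀ : ℝ) / 2 * (t - a₀)⁻¹ + (γ₁ : ℝ) / 2 * (t - a₁)⁻¹ +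
            (γ₂ : ℝ) / 2 * (t - a₂)⁻¹) ^ 2) +
      (1 / 2) * ((t - a₀) * (t - a₁) + (t - a₀) * (t - a₂) + (t - a₁) * (t - a₂)) *
        ((γ₀ : ℝ) / 2 * (t - a₀)⁻¹ + (γ₁ : ℝ) / 2 * (t - a₁)⁻¹ + (γ₂ : ℝ) / 2 * (t - a₂)⁻¹) =
    (1 / 4) * (((γ₀ : ℝ) + γ₁ + γ₂) * ((γ₀ + γ₁ + γ₂) + 1) * t -
      ((a₀ + a₁) * γ₂ + (a₀ + a₂) * γ₁ + (a₁ + a₂) * γ₀ +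
        2 * γ₀ * γ₁ * a₂ + 2 * γ₁ * γ₂ * a₀ + 2 * γ₀ * γ₂ * a₁)) := by
  interval_cases γ₀ <;> interval_cases γ₁ <;> interval_cases γ₂ <;>
    · push_cast
      field_simp
      ring

theorem lame_change_of_unknown_general (a₀ a₁ a₂ lam : ℝ) (k : ℕ) (γ₀ γ₁ γ₂ : ℕ)
    (hγ₀ : γ₀ ≤ 1) (hγ₁ : γ₁ ≤ 1) (hγ₂ : γ₂ ≤ 1)
    (φ : ℝ → ℝ) (hφ : ContDiff ℝ 2 φ) :
    let A : ℝ → ℝ := fun t => (t - a₀) * (t - a₁) * (t - a₂)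
    let A' : ℝ → ℝ := fun t => (t - a₀) * (t - a₁) + (t - a₀) * (t - a₂) + (t - a₁) * (t - a₂)
    let ψ : ℝ → ℝ := fun t =>
      |t - a₀| ^ ((γ₀ : ℝ) / 2) * |t - a₁| ^ ((γ₁ : ℝ) / 2) * |t - a₂| ^ ((γ₂ : ℝ) / 2) * φ t
    let g : ℝ := (γ₀ : ℝ) + γ₁ + γ₂
    let D : ℝ := (a₀ + a₁) * γ₂ + (a₀ + a₂) * γ₁ + (a₁ + a₂) * γ₀ +
      2 * γ₀ * γ₁ * a₂ + 2 * γ₁ * γ₂ * a₀ + 2 * γ₀ * γ₂ * a₁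
    (∀ t : ℝ, t ≠ a₀ → t ≠ a₁ → t ≠ a₂ →
        A t * deriv (deriv ψ) t + (1 / 2) * A' t * deriv ψ t =
          (1 / 4) * ((k : ℝ) * ((k : ℝ) + 1) * t - lam) * ψ t) →
      ∀ t : ℝ, t ≠ a₀ → t ≠ a₁ → t ≠ a₂ →
        A t * deriv (deriv φ) t +
            (((γ₀ : ℝ) + 1 / 2) * ((t - a₁) * (t - a₂)) +
              ((γ₁ : ℝ) + 1 / 2) * ((t - a₀) * (t - a₂)) +
              ((γ₂ : ℝ) + 1 / 2) * ((t - a₀) * (t - a₁))) * deriv φ t =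
          (1 / 4) * (((k : ℝ) - g) * ((k : ℝ) + g + 1) * t - lam + D) * φ t := by
  intro A A' ψ g D hψ t ht₀ ht₁ ht₂
  set w : ℝ → ℝ := fun s =>
    |s - a₀| ^ ((γ₀ : ℝ) / 2) * |s - a₁| ^ ((γ₁ : ℝ) / 2) * |s - a₂| ^ ((γ₂ : ℝ) / 2)
  set h : ℝ → ℝ := fun s =>
    (γ₀ : ℝ) / 2 * (s - a₀)⁻¹ + (γ₁ : ℝ) / 2 * (s - a₁)⁻¹ + (γ₂ : ℝ) / 2 * (s - a₂)⁻¹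
  have hw : ∀ᶠ s in 𝓝 t, HasDerivAt w (w s * h s) s := by
    filter_upwards [eventually_ne_nhds ht₀, eventually_ne_nhds ht₁, eventually_ne_nhds ht₂]
      with s hs₀ hs₁ hs₂
    exact (((hasDerivAt_abs_sub_rpow _ hs₀).fun_mul (hasDerivAt_abs_sub_rpow _ hs₁)).fun_mul
      (hasDerivAt_abs_sub_rpow _ hs₂)).congr_deriv (by ring)
  have hh : HasDerivAt h _ t :=
    ((((hasDerivAt_id' t).sub_const a₀).inv (sub_ne_zero.mpr ht₀)).const_mul _ |>.fun_add
      ((((hasDerivAt_id' t).sub_const a₁).inv (sub_ne_zero.mpr ht₁)).const_mul _)).fun_add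
      ((((hasDerivAt_id' t).sub_const a₂).inv (sub_ne_zero.mpr ht₂)).const_mul _)
  have hwt : w t ≠ 0 := by positivity
  have key := secondOrder_eq_of_mul_logDeriv hw hwt hh
    (.of_forall fun s => (hφ.differentiable two_ne_zero).differentiableAt)
    (hφ.differentiable_deriv_two t) (hψ t ht₀ ht₁ ht₂)
  have e₀ := sub_ne_zero.mpr ht₀
  have e₁ := sub_ne_zero.mpr ht₁
  have e₂ := sub_ne_zero.mpr ht₂
  have hcoeff₁ := lame_firstOrder_coeff a₀ a₁ a₂ t γ₀ γ₁ γ₂ e₀ e₁ e₂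
  have hcoeff₀ := lame_zeroOrder_coeff a₀ a₁ a₂ t hγ₀ hγ₁ hγ₂ e₀ e₁ e₂
  simp only [A, A', g, D, h] at key hcoeff₁ hcoeff₀ ⊢
  linear_combination key - deriv φ t * hcoeff₁ - φ t * hcoeff₀

/-- Change of unknown for the Lamé operator: if
`ψ = |x-α₀²|^{γ₀/2}|x-α₁²|^{γ₁/2}|x-α₂²|^{γ₂/2} φ` satisfies
`A ψ'' + ½ A' ψ' = ¼(k(k+1)x - lam)ψ`, then `φ` satisfies the generalized Lamé equation. -/
theorem lame_change_of_unknown (a₀ a₁ a₂ lam : ℝ) (k : ℕ) (γ₀ γ₁ γ₂ : ℕ)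
    (h0 : 0 < a₀) (h01 : a₀ < a₁) (h12 : a₁ < a₂)
    (hγ₀ : γ₀ ≤ 1) (hγ₁ : γ₁ ≤ 1) (hγ₂ : γ₂ ≤ 1)
    (hk : 0 < k) (hkγ : Even ((k : ℤ) - (γ₀ + γ₁ + γ₂)))
    (φ : ℝ → ℝ) (hφ : ContDiff ℝ 2 φ) :
    let A : ℝ → ℝ := fun t => (t - a₀) * (t - a₁) * (t - a₂)
    let A' : ℝ → ℝ := fun t => (t - a₀) * (t - a₁) + (t - a₀) * (t - a₂) + (t - a₁) * (t - a₂)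
    let ψ : ℝ → ℝ := fun t =>
      |t - a₀| ^ ((γ₀ : ℝ) / 2) * |t - a₁| ^ ((γ₁ : ℝ) / 2) * |t - a₂| ^ ((γ₂ : ℝ) / 2) * φ t
    let g : ℝ := (γ₀ : ℝ) + γ₁ + γ₂
    let D : ℝ := (a₀ + a₁) * γ₂ + (a₀ + a₂) * γ₁ + (a₁ + a₂) * γ₀ +
      2 * γ₀ * γ₁ * a₂ + 2 * γ₁ * γ₂ * a₀ + 2 * γ₀ * γ₂ * a₁
    (∀ t : ℝ, t ≠ a₀ → t ≠ a₁ → t ≠ a₂ →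
        A t * deriv (deriv ψ) t + (1 / 2) * A' t * deriv ψ t =
          (1 / 4) * ((k : ℝ) * ((k : ℝ) + 1) * t - lam) * ψ t) →
      ∀ t : ℝ, t ≠ a₀ → t ≠ a₁ → t ≠ a₂ →
        A t * deriv (deriv φ) t +
            (((γ₀ : ℝ) + 1 / 2) * ((t - a₁) * (t - a₂)) +
              ((γ₁ : ℝ) + 1 / 2) * ((t - a₀) * (t - a₂)) +
              ((γ₂ : ℝ) + 1 / 2) * ((t - a₀) * (t - a₁))) * deriv φ t =
          (1 / 4) * (((k : ℝ) - g) * ((k : ℝ) + g + 1) * t - lam + D) * φ t :=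
  lame_change_of_unknown_general a₀ a₁ a₂ lam k γ₀ γ₁ γ₂ hγ₀ hγ₁ hγ₂ φ hφ
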